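/- The biorthogonal system to the Riesz basis {g_*, (g_n)_{n∈ℤ}} of H_α^T is given by g_*^*(x) = 1 and g_n^*(x) = ∫₀^x e^{-αy/2} e_n^*(y) dy, where e_n^*(y) = (1 − e^{-2λT}) e^{2λ·cut(y)} e_n(y); that is, ⟨g_m, g_n^*⟩_α = δ_{mn}, ⟨g_*, g_n^*⟩_α = 0, and ⟨g_m, g_*^*⟩_α = 0, ⟨g_*, g_*^*⟩_α = 1. -/

import Mathlib

/-!
The derivatives of `g_m` and `g_n^*` are explicit exponentials. In the integrand of
`⟨g_m, g_n^*⟩_α` the weights `e^{-αx/2}` cancel against `e^{αx}`, and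
`e^{2λ cut(x)} e^{-2λx} = r^{⌊x/T⌋}` with `r = e^{-2λT}`. So on `[kT, (k+1)T)` the integrand is
`(1 - r) r^k / T · e^{2πi(m-n)x/T}`: integrating the character over a period gives `T δ_{mn}`,
and `∑ₖ (1 - r) r^k = 1`. The other three pairings vanish because `g_m(0) = g_n^*(0) = 0` and
`g_*' = 0`.
-/

open MeasureTheory Complex

/-- `cut T x = x mod T`. -/
noncomputable def cut (T x : ℝ) : ℝ := x - T * ⌊x / T⌋

/-- `λ_n = 2πin/T - λ - α/2`. -/
noncomputable def lamn (T lm al : ℝ) (n : ℤ) : ℂ :=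
  2 * Real.pi * Complex.I * n / T - lm - al / 2

/-- `g_n(x) = (λ_n √T)⁻¹ (e^{λ_n x} - 1)`. -/
noncomputable def gfun (T lm al : ℝ) (n : ℤ) (x : ℝ) : ℂ :=
  (Complex.exp (lamn T lm al n * x) - 1) / (lamn T lm al n * Real.sqrt T)

/-- `g_n'(x) = T^{-1/2} e^{λ_n x}`. -/
noncomputable def dgfun (T lm al : ℝ) (n : ℤ) (x : ℝ) : ℂ :=
  Complex.exp (lamn T lm al n * x) / (Real.sqrt T : ℝ)

/-- `g_*(x) = 1` (and `g_*^* = g_*`). -/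
noncomputable def gstar (_x : ℝ) : ℂ := 1

/-- `e_n(x) = T^{-1/2} exp((2πin/T - λ)x)`. -/
noncomputable def efun (T lm : ℝ) (n : ℤ) (x : ℝ) : ℂ :=
  (1 / Real.sqrt T : ℝ) • Complex.exp ((2 * Real.pi * Complex.I * n / T - lm) * x)

/-- `e_n^*(y) = (1 - e^{-2λT}) e^{2λ cut(y)} e_n(y)`. -/
noncomputable def enstar (T lm : ℝ) (n : ℤ) (y : ℝ) : ℂ :=
  ((1 - Real.exp (-2 * lm * T)) * Real.exp (2 * lm * cut T y)) • efun T lm n y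

/-- the derivative of `g_n^*`, i.e. `y ↦ e^{-αy/2} e_n^*(y)`. -/
noncomputable def dgnstar (T lm al : ℝ) (n : ℤ) (y : ℝ) : ℂ :=
  Real.exp (-al * y / 2) • enstar T lm n y

/-- `g_n^*(x) = ∫₀^x e^{-αy/2} e_n^*(y) dy`. -/
noncomputable def gnstar (T lm al : ℝ) (n : ℤ) (x : ℝ) : ℂ :=
  ∫ y in (0:ℝ)..x, dgnstar T lm al n y

open Set Function Real

section PeriodicPieces

variable {T : ℝ}

lemma natFloor_div_eq_of_mem_Ico (hT : 0 < T) {k : ℕ} {x : ℝ}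
    (hx : x ∈ Ico (k * T) ((k + 1) * T)) : ⌊x / T⌋₊ = k := by
  rw [Nat.floor_eq_iff (div_nonneg ((by positivity : (0:ℝ) ≤ k * T).trans hx.1) hT.le),
    le_div_iff₀ hT, div_lt_iff₀ hT]
  exact hx

lemma iUnion_Ico_nat_mul (hT : 0 < T) : ⋃ k : ℕ, Ico (k * T) ((k + 1) * T) = Ici 0 := by
  have hunbdd : ¬BddAbove (range fun k : ℕ => (k : ℝ) * T) := by
    rintro ⟨b, hb⟩
    obtain ⟨k, hk⟩ := exists_nat_gt (b / T)
    have hkb := hb ⟨k, rfl⟩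
    rw [div_lt_iff₀ hT] at hk
    linarith
  simpa [Nat.succ_eq_add_one] using iUnion_Ico_map_succ_eq_Ici (f := fun k : ℕ => (k : ℝ) * T)
    (fun k => by simp only [Nat.bot_eq_zero, Nat.cast_zero, zero_mul]; positivity) hunbdd

lemma pairwise_disjoint_Ico_nat_mul (hT : 0 ≤ T) :
    Pairwise (Disjoint on fun k : ℕ => Ico ((k : ℝ) * T) ((k + 1) * T)) := by
  simpa [Nat.succ_eq_add_one] using
    (show Monotone fun k : ℕ => (k : ℝ) * T from
      fun _ _ hij => mul_le_mul_of_nonneg_right (Nat.cast_le.2 hij) hT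
      ).pairwise_disjoint_on_Ico_succ

variable {E : Type*} [NormedAddCommGroup E] [NormedSpace ℝ E]

lemma Function.Periodic.setIntegral_Ico_nat_mul {g : ℝ → E} (hg : Periodic g T) (hT : 0 ≤ T)
    (k : ℕ) : ∫ x in Ico (k * T) ((k + 1) * T), g x = ∫ x in (0)..T, g x := by
  rw [integral_Ico_eq_integral_Ioc, ← intervalIntegral.integral_of_le (by nlinarith),
    add_one_mul, hg.intervalIntegral_add_eq (k * T) 0, zero_add]

theorem integral_Ici_eq_tsum_smul_of_periodic {F h : ℝ → E} {c : ℕ → ℝ} (hT : 0 < T)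
    (hh : Continuous h) (hper : Periodic h T) (hc : Summable c)
    (hF : ∀ x, 0 ≤ x → F x = c ⌊x / T⌋₊ • h x) :
    ∫ x in Ici 0, F x = (∑' k, c k) • ∫ x in (0)..T, h x := by
  have hpiece (k : ℕ) : EqOn F (fun x => c k • h x) (Ico (k * T) ((k + 1) * T)) := fun x hx => by
    rw [hF x ((by positivity : (0:ℝ) ≤ k * T).trans hx.1), natFloor_div_eq_of_mem_Ico hT hx]
  have hint (k : ℕ) : IntegrableOn F (Ico (k * T) ((k + 1) * T)) :=
    IntegrableOn.congr_fun ((hh.integrableOn_Icc.mono_set Ico_subset_Icc_self).smul (c k))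
      (hpiece k).symm measurableSet_Ico
  have hnorm (k : ℕ) : ∫ x in Ico (k * T) ((k + 1) * T), ‖F x‖ = ‖c k‖ * ∫ x in (0)..T, ‖h x‖ := by
    rw [setIntegral_congr_fun measurableSet_Ico fun x hx => by rw [hpiece k hx, norm_smul],
      integral_const_mul]
    exact congrArg _ ((hper.comp norm).setIntegral_Ico_nat_mul hT.le k)
  have hFint : IntegrableOn F (Ici 0) := by
    rw [← iUnion_Ico_nat_mul hT]
    exact integrableOn_iUnion_of_summable_integral_norm hint
      (by simpa only [hnorm] using hc.norm.mul_right _)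
  have hsum := hasSum_integral_iUnion (fun _ => measurableSet_Ico)
    (pairwise_disjoint_Ico_nat_mul hT.le) (by rwa [iUnion_Ico_nat_mul hT])
  rw [iUnion_Ico_nat_mul hT] at hsum
  refine hsum.unique ?_
  simp only [setIntegral_congr_fun measurableSet_Ico (hpiece _), integral_smul,
    hper.setIntegral_Ico_nat_mul hT.le]
  exact hc.hasSum.smul_const _

end PeriodicPieces

lemma periodic_cexp_two_pi_I_int_div {T : ℝ} (hT : T ≠ 0) (j : ℤ) :
    Periodic (fun x : ℝ => cexp (2 * π * I * j / T * x)) T := fun x => by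
  have hT' : (T : ℂ) ≠ 0 := ofReal_ne_zero.2 hT
  dsimp only
  rw [show (2 * π * I * j / T * ↑(x + T) : ℂ) = 2 * π * I * j / T * x + j * (2 * π * I) by
      push_cast; field_simp,
    Complex.exp_add, exp_int_mul_two_pi_mul_I, mul_one]

lemma integral_cexp_two_pi_I_int_div {T : ℝ} (hT : T ≠ 0) (j : ℤ) :
    ∫ x in (0)..T, cexp (2 * π * I * j / T * x) = if j = 0 then (T : ℂ) else 0 := by
  split_ifs with hj
  · simp [hj]
  · have hc : (2 * π * I * j / T : ℂ) ≠ 0 := by simp [hj, hT, Real.pi_ne_zero, I_ne_zero]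
    have hperiod := periodic_cexp_two_pi_I_int_div hT j 0
    simp only [zero_add] at hperiod
    rw [integral_exp_mul_complex hc, hperiod, sub_self, zero_div]

lemma dgfun_mul_conj_dgnstar_mul_exp {T : ℝ} (hT : 0 < T) (lm al : ℝ) (m n : ℤ) {x : ℝ}
    (hx : 0 ≤ x) :
    dgfun T lm al m x * starRingEnd ℂ (dgnstar T lm al n x) * rexp (al * x) =
      ((1 - rexp (-2 * lm * T)) / T * rexp (-2 * lm * T) ^ ⌊x / T⌋₊) •
        cexp (2 * π * I * (m - n : ℤ) / T * x) := by
  have hsqrt : (√T : ℂ) * √T = T := by exact_mod_cast Real.mul_self_sqrt hT.le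
  have hfloor : (⌊x / T⌋₊ : ℝ) = ⌊x / T⌋ := by
    exact_mod_cast Int.natCast_floor_eq_floor (div_nonneg hx hT.le)
  rw [← Real.exp_nat_mul, hfloor]
  simp only [dgfun, dgnstar, enstar, efun, cut, lamn, Complex.real_smul, map_mul,
    Complex.conj_ofReal, ← Complex.exp_conj]
  push_cast
  simp only [map_sub, map_mul, map_div₀, Complex.conj_ofReal, Complex.conj_I, map_ofNat,
    map_intCast]
  calc _ = (1 - cexp (-2 * lm * T)) / (√T * √T) * cexp ((2 * π * I * m / T - lm - al / 2) * x
        + -al * x / 2 + 2 * lm * (x - T * ⌊x / T⌋) + (2 * π * -I * n / T - lm) * x + al * x) := by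
        simp only [Complex.exp_add]; ring
    _ = (1 - cexp (-2 * lm * T)) / T
          * cexp ((⌊x / T⌋ : ℂ) * (-2 * lm * T) + 2 * π * I * (m - n) / T * x) := by
        rw [hsqrt]; congr 2; ring
    _ = _ := by rw [Complex.exp_add, ← mul_assoc]

theorem integral_dgfun_mul_conj_dgnstar_mul_exp {T lm : ℝ} (hT : 0 < T) (hl : 0 < lm) (al : ℝ)
    (m n : ℤ) :
    ∫ x in Ici (0 : ℝ), dgfun T lm al m x * starRingEnd ℂ (dgnstar T lm al n x) * rexp (al * x)
      = if m = n then 1 else 0 := by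
  set r := rexp (-2 * lm * T)
  have hr0 : 0 ≤ r := (Real.exp_pos _).le
  have hr1 : r < 1 := Real.exp_lt_one_iff.2 (by nlinarith)
  rw [integral_Ici_eq_tsum_smul_of_periodic hT (by fun_prop)
      (periodic_cexp_two_pi_I_int_div hT.ne' (m - n))
      ((summable_geometric_of_lt_one hr0 hr1).mul_left ((1 - r) / T))
      (fun x hx => dgfun_mul_conj_dgnstar_mul_exp hT lm al m n hx),
    integral_cexp_two_pi_I_int_div hT.ne', tsum_mul_left, tsum_geometric_of_lt_one hr0 hr1]
  simp only [sub_eq_zero]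
  split_ifs
  · have hr : (1 - r : ℂ) ≠ 0 := by exact_mod_cast (sub_pos.2 hr1).ne'
    have hT' : (T : ℂ) ≠ 0 := ofReal_ne_zero.2 hT.ne'
    rw [Complex.real_smul]
    push_cast
    field_simp
  · rw [smul_zero]

lemma gfun_zero (T lm al : ℝ) (m : ℤ) : gfun T lm al m 0 = 0 := by
  simp [gfun]

lemma gnstar_zero (T lm al : ℝ) (n : ℤ) : gnstar T lm al n 0 = 0 :=
  intervalIntegral.integral_same

theorem stmt_8_general (T lm al : ℝ) (hT : 0 < T) (hl : 0 < lm) :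
    -- ⟨g_m, g_n^*⟩_α = δ_{mn}
    (∀ m n : ℤ,
      gfun T lm al m 0 * (starRingEnd ℂ) (gnstar T lm al n 0)
          + (∫ x in Set.Ici (0:ℝ),
              dgfun T lm al m x * (starRingEnd ℂ) (dgnstar T lm al n x) *
                Real.exp (al * x))
        = if m = n then 1 else 0) ∧
    -- ⟨g_*, g_n^*⟩_α = 0
    (∀ n : ℤ,
      gstar 0 * (starRingEnd ℂ) (gnstar T lm al n 0)
          + (∫ x in Set.Ici (0:ℝ),
              (0 : ℂ) * (starRingEnd ℂ) (dgnstar T lm al n x) * Real.exp (al * x))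
        = 0) ∧
    -- ⟨g_m, g_*^*⟩_α = 0
    (∀ m : ℤ,
      gfun T lm al m 0 * (starRingEnd ℂ) (gstar 0)
          + (∫ x in Set.Ici (0:ℝ),
              dgfun T lm al m x * (starRingEnd ℂ) (0 : ℂ) * Real.exp (al * x))
        = 0) ∧
    -- ⟨g_*, g_*^*⟩_α = 1
    (gstar 0 * (starRingEnd ℂ) (gstar 0)
        + (∫ x in Set.Ici (0:ℝ),
            (0 : ℂ) * (starRingEnd ℂ) (0 : ℂ) * Real.exp (al * x))
      = 1) := by
  refine ⟨fun m n => ?_, fun n => by simp [gnstar_zero], fun m => by simp [gfun_zero],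
    by simp [gstar]⟩
  rw [gnstar_zero, map_zero, mul_zero, zero_add]
  exact integral_dgfun_mul_conj_dgnstar_mul_exp hT hl al m n

/-- biorthogonality of `{g_*, (g_n)}` and `{g_*^*, (g_n^*)}` for the
inner product `⟨f,g⟩_α = f(0) conj(g(0)) + ∫₀^∞ f' conj(g') e^{αx} dx`. -/
theorem stmt_8 (T lm al : ℝ) (hT : 0 < T) (hl : 0 < lm) (hal : 0 < al) :
    -- ⟨g_m, g_n^*⟩_α = δ_{mn}
    (∀ m n : ℤ,
      gfun T lm al m 0 * (starRingEnd ℂ) (gnstar T lm al n 0)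
          + (∫ x in Set.Ici (0:ℝ),
              dgfun T lm al m x * (starRingEnd ℂ) (dgnstar T lm al n x) *
                Real.exp (al * x))
        = if m = n then 1 else 0) ∧
    -- ⟨g_*, g_n^*⟩_α = 0
    (∀ n : ℤ,
      gstar 0 * (starRingEnd ℂ) (gnstar T lm al n 0)
          + (∫ x in Set.Ici (0:ℝ),
              (0 : ℂ) * (starRingEnd ℂ) (dgnstar T lm al n x) * Real.exp (al * x))
        = 0) ∧
    -- ⟨g_m, g_*^*⟩_α = 0
    (∀ m : ℤ,
      gfun T lm al m 0 * (starRingEnd ℂ) (gstar 0)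
          + (∫ x in Set.Ici (0:ℝ),
              dgfun T lm al m x * (starRingEnd ℂ) (0 : ℂ) * Real.exp (al * x))
        = 0) ∧
    -- ⟨g_*, g_*^*⟩_α = 1
    (gstar 0 * (starRingEnd ℂ) (gstar 0)
        + (∫ x in Set.Ici (0:ℝ),
            (0 : ℂ) * (starRingEnd ℂ) (0 : ℂ) * Real.exp (al * x))
      = 1) :=
  stmt_8_general T lm al hT hl
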